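/- Let k be a field, B = k[x]/(x²), C = k[y]/(y²), A = k, and R = B ×_A C ≅ k[x,y]/(x², xy, y²). The natural map Ω¹_{R/k} → Ω¹_{B/k} × Ω¹_{C/k} induced by the two projections is surjective but not injective. -/

import Mathlib

set_option synthInstance.maxHeartbeats 1000000
set_option maxHeartbeats 2000000

/-- `B = k[x]/(x²)`. -/
abbrev TruncB (k : Type*) [Field k] : Type _ :=
  Polynomial k ⧸ Ideal.span {(Polynomial.X : Polynomial k) ^ 2}

/-- `C = k[y]/(y²)`, a separate copy of `k[x]/(x²)`. -/
def TruncC (k : Type*) [Field k] : Type _ := TruncB k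

noncomputable instance (k : Type*) [Field k] : CommRing (TruncC k) :=
  inferInstanceAs (CommRing (TruncB k))

noncomputable instance (k : Type*) [Field k] : Algebra k (TruncC k) :=
  inferInstanceAs (Algebra k (TruncB k))

/-- The augmentation map `k[x]/(x²) → k`, `x ↦ 0`. -/
noncomputable def truncAugB (k : Type*) [Field k] : TruncB k →ₐ[k] k :=
  Ideal.Quotient.liftₐ _ (Polynomial.aeval (0 : k)) (by
    intro a ha
    have h : Ideal.span {(Polynomial.X : Polynomial k) ^ 2} ≤
        RingHom.ker (Polynomial.aeval (0 : k) : Polynomial k →ₐ[k] k).toRingHom := by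
      rw [Ideal.span_le]
      rintro p rfl
      simp [RingHom.mem_ker]
    exact h ha)

/-- The augmentation map `k[y]/(y²) → k`, `y ↦ 0`. -/
noncomputable def truncAugC (k : Type*) [Field k] : TruncC k →ₐ[k] k := truncAugB k

/-- The fibered product `R = B ×_k C` of the two augmentations, as a subalgebra of
`B × C`. -/
noncomputable def FiberProd (k : Type*) [Field k] : Subalgebra k (TruncB k × TruncC k) :=
  AlgHom.equalizer ((truncAugB k).comp (AlgHom.fst k (TruncB k) (TruncC k)))
    ((truncAugC k).comp (AlgHom.snd k (TruncB k) (TruncC k)))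

/-- The first projection `R → B`, as an algebra structure. -/
noncomputable instance (k : Type*) [Field k] : Algebra (FiberProd k) (TruncB k) :=
  ((AlgHom.fst k (TruncB k) (TruncC k)).comp (FiberProd k).val).toAlgebra

noncomputable instance (k : Type*) [Field k] : IsScalarTower k (FiberProd k) (TruncB k) :=
  IsScalarTower.of_algebraMap_eq fun c =>
    (((AlgHom.fst k (TruncB k) (TruncC k)).comp (FiberProd k).val).commutes c).symm

/-- The second projection `R → C`, as an algebra structure. -/
noncomputable instance (k : Type*) [Field k] : Algebra (FiberProd k) (TruncC k) :=
  ((AlgHom.snd k (TruncB k) (TruncC k)).comp (FiberProd k).val).toAlgebra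

noncomputable instance (k : Type*) [Field k] : IsScalarTower k (FiberProd k) (TruncC k) :=
  IsScalarTower.of_algebraMap_eq fun c =>
    (((AlgHom.snd k (TruncB k) (TruncC k)).comp (FiberProd k).val).commutes c).symm

noncomputable instance (k : Type*) [Field k] : SMulCommClass k (FiberProd k) (TruncB k) :=
  ⟨fun c r b => by simp only [Algebra.smul_def]; first | exact (mul_smul_comm c _ b).symm | ring⟩

noncomputable instance (k : Type*) [Field k] : SMulCommClass k (FiberProd k) (TruncC k) :=
  ⟨fun c r b => by simp only [Algebra.smul_def]; first | exact (mul_smul_comm c _ b).symm | ring⟩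

/-- The natural `k`-linear comparison map
`Ω¹_{R/k} → Ω¹_{B/k} × Ω¹_{C/k}` induced by the two projections. -/
noncomputable def kaehlerComparison (k : Type*) [Field k] :
    Ω[(FiberProd k)⁄k] →ₗ[k] Ω[(TruncB k)⁄k] × Ω[(TruncC k)⁄k] :=
  LinearMap.prod
    ((KaehlerDifferential.map k k (FiberProd k) (TruncB k)).restrictScalars k)
    ((KaehlerDifferential.map k k (FiberProd k) (TruncC k)).restrictScalars k)

/-!
Every `b ∈ B` lifts to `(b, ε(b)) ∈ R`, whose image in `C` is a constant, so `Ω¹_{B/k} × 0`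
lies in the image (and symmetrically for `C`). The form `x dy` dies in both factors, because
`y ↦ 0` in `B` and `x ↦ 0` in `C`. It is nonzero in `Ω¹_{R/k}`: the map
`R → T = k[β, γ]/(β, γ)²`, `x ↦ β`, `y ↦ γ`, sends it to `β dγ`, and the derivation
`t ↦ (γ-coefficient, -(β-coefficient), 0)` of `T` into its `k`-dual `T^∨` sends `β dγ` to the
functional dual to `1`.
-/

open TrivSqZeroExt DualNumber

namespace KaehlerDifferential

section Product

variable {k R S T : Type*} [CommRing k] [CommRing R] [CommRing S] [CommRing T]
  [Algebra k R] [Algebra k S] [Algebra k T] [Algebra R S] [Algebra R T]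
  [IsScalarTower k R S] [IsScalarTower k R T]

theorem mk_zero_mem_range_map_prod_map
    (hlift : ∀ s : S, ∃ r : R, algebraMap R S r = s ∧ D k T (algebraMap R T r) = 0)
    (ω : Ω[S⁄k]) : (ω, 0) ∈ LinearMap.range ((map k k R S).prod (map k k R T)) := by
  have hsurj : Function.Surjective (algebraMap R S) := fun s ↦ (hlift s).imp fun _ h ↦ h.1
  have hω : ω ∈ Submodule.span R (Set.range (D k S)) := by
    rw [← Submodule.restrictScalars_span R S hsurj, span_range_derivation]
    trivial
  have hspan : Submodule.span R (Set.range (D k S)) ≤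
      (LinearMap.range ((map k k R S).prod (map k k R T))).comap (LinearMap.inl R _ _) := by
    rw [Submodule.span_le]
    rintro _ ⟨s, rfl⟩
    obtain ⟨r, rfl, hr⟩ := hlift s
    exact ⟨D k R r, by simp [hr]⟩
  exact hspan hω

theorem map_prod_map_surjective
    (hS : ∀ s : S, ∃ r : R, algebraMap R S r = s ∧ D k T (algebraMap R T r) = 0)
    (hT : ∀ t : T, ∃ r : R, algebraMap R T r = t ∧ D k S (algebraMap R S r) = 0) :
    Function.Surjective ((map k k R S).prod (map k k R T)) := by
  rintro ⟨ω, ω'⟩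
  obtain ⟨η, hη⟩ := mk_zero_mem_range_map_prod_map hS ω
  obtain ⟨η', hη'⟩ := mk_zero_mem_range_map_prod_map hT ω'
  refine ⟨η + η', Prod.ext ?_ ?_⟩
  · simpa using congr($hη.1 + $hη'.2)
  · simpa using congr($hη.2 + $hη'.1)

theorem map_prod_map_smul_D_eq_zero {x y : R} (hx : algebraMap R T x = 0)
    (hy : algebraMap R S y = 0) : (map k k R S).prod (map k k R T) (x • D k R y) = 0 := by
  ext
  · simp [hy]
  · simp [← algebraMap_smul T x, hx]

end Product

theorem smul_D_ne_zero_of_algHom {k R T : Type*} [CommRing k] [CommRing R] [CommRing T]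
    [Algebra k R] [Algebra k T] (f : R →ₐ[k] T) {x y : R} (h : f x • D k T (f y) ≠ 0) :
    x • D k R y ≠ 0 := by
  let := f.toAlgebra
  have : IsScalarTower k R T := IsScalarTower.of_algebraMap_eq fun c ↦ (f.commutes c).symm
  intro h0
  apply h
  have h0T := congr(map k k R T $h0)
  rwa [map_smul, map_D, map_zero, ← algebraMap_smul T x] at h0T

end KaehlerDifferential

/-- The `k`-dual of `T = k[β, γ]/(β, γ)²`, in the coordinates dual to `β, γ, 1`;
`T` acts by `(t • φ) s = φ (t s)`. -/
abbrev PlaneDual (k : Type*) : Type _ := k × k × k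

namespace PlaneDual

variable {k : Type*} [CommRing k]

instance : SMul (TrivSqZeroExt k (k × k)) (PlaneDual k) where
  smul t m := (t.fst * m.1, t.fst * m.2.1, t.fst * m.2.2 + t.snd.1 * m.1 + t.snd.2 * m.2.1)

theorem smul_def (t : TrivSqZeroExt k (k × k)) (m : PlaneDual k) :
    t • m = (t.fst * m.1, t.fst * m.2.1, t.fst * m.2.2 + t.snd.1 * m.1 + t.snd.2 * m.2.1) :=
  rfl

instance : Module (TrivSqZeroExt k (k × k)) (PlaneDual k) where
  one_smul m := by simp [smul_def]
  mul_smul s t m := by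
    simp only [smul_def, TrivSqZeroExt.snd_mul, TrivSqZeroExt.fst_mul]
    ext <;> simp <;> ring
  smul_zero t := by simp [smul_def]
  smul_add t m n := by simp only [smul_def]; ext <;> simp <;> ring
  add_smul s t m := by simp only [smul_def]; ext <;> simp <;> ring
  zero_smul m := by simp [smul_def]

instance : IsScalarTower k (TrivSqZeroExt k (k × k)) (PlaneDual k) where
  smul_assoc c t m := by simp only [smul_def]; ext <;> simp <;> ring

def derivation : Derivation k (TrivSqZeroExt k (k × k)) (PlaneDual k) where
  toFun t := (t.snd.2, -t.snd.1, 0)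
  map_add' s t := by ext <;> simp [add_comm]
  map_smul' c t := by ext <;> simp
  map_one_eq_zero' := by simp
  leibniz' s t := by simp only [smul_def]; ext <;> simp <;> ring

end PlaneDual

theorem KaehlerDifferential.inr_smul_D_inr_ne_zero (k : Type*) [CommRing k] [Nontrivial k] :
    (inr (1, 0) : TrivSqZeroExt k (k × k)) • D k (TrivSqZeroExt k (k × k)) (inr (0, 1)) ≠ 0 := by
  intro h
  have := congr(PlaneDual.derivation.liftKaehlerDifferential $h)
  simp [PlaneDual.derivation, PlaneDual.smul_def] at this

section DualNumberPair

variable {k A : Type*} [CommRing k] [CommRing A] [Algebra k A]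

def dualNumberPairHom (f g : A →ₐ[k] k[ε]) (hfg : ∀ a, (g a).fst = (f a).fst) :
    A →ₐ[k] TrivSqZeroExt k (k × k) where
  toFun a := inl (f a).fst + inr ((f a).snd, (g a).snd)
  map_one' := by ext <;> simp
  map_mul' a b := by ext <;> simp [hfg]
  map_zero' := by ext <;> simp
  map_add' a b := by ext <;> simp
  commutes' c := by ext <;> simp [algebraMap_eq_inl]

@[simp] theorem dualNumberPairHom_apply (f g : A →ₐ[k] k[ε]) (hfg : ∀ a, (g a).fst = (f a).fst)
    (a : A) : dualNumberPairHom f g hfg a = inl (f a).fst + inr ((f a).snd, (g a).snd) :=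
  rfl

end DualNumberPair

section FiberProd

variable (k : Type*) [Field k]

noncomputable def truncToDual : TruncB k →ₐ[k] k[ε] :=
  Ideal.Quotient.liftₐ _ (Polynomial.aeval ε) fun p hp ↦ by
    obtain ⟨q, rfl⟩ := Ideal.mem_span_singleton'.mp hp
    simp [sq]

theorem truncToDual_mk_X : truncToDual k (Ideal.Quotient.mk _ Polynomial.X) = ε :=
  Polynomial.aeval_X ε

theorem fst_truncToDual (b : TruncB k) : (truncToDual k b).fst = truncAugB k b := by
  obtain ⟨p, rfl⟩ := Ideal.Quotient.mk_surjective b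
  change fstHom k k k (Polynomial.aeval ε p) = Polynomial.aeval 0 p
  simp [← Polynomial.aeval_algHom_apply]

noncomputable def truncToDualC : TruncC k →ₐ[k] k[ε] := truncToDual k

theorem fst_truncToDualC (c : TruncC k) : (truncToDualC k c).fst = truncAugC k c :=
  fst_truncToDual k c

theorem truncToDualC_mk_X : truncToDualC k (Ideal.Quotient.mk _ Polynomial.X) = ε :=
  truncToDual_mk_X k

noncomputable def fiberProdToPlane : FiberProd k →ₐ[k] TrivSqZeroExt k (k × k) :=
  dualNumberPairHom (A := FiberProd k)
    ((truncToDual k).comp ((AlgHom.fst k (TruncB k) (TruncC k)).comp (FiberProd k).val))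
    ((truncToDualC k).comp ((AlgHom.snd k (TruncB k) (TruncC k)).comp (FiberProd k).val))
    fun r ↦ by
      simp only [AlgHom.comp_apply, fst_truncToDual, fst_truncToDualC]
      exact r.2.symm

noncomputable def fiberProdX : FiberProd k :=
  ⟨(Ideal.Quotient.mk _ Polynomial.X, 0), by
    change Polynomial.aeval (0 : k) Polynomial.X = truncAugC k 0
    simp⟩

noncomputable def fiberProdY : FiberProd k :=
  ⟨(0, Ideal.Quotient.mk _ Polynomial.X), by
    change truncAugB k 0 = Polynomial.aeval (0 : k) Polynomial.X
    simp⟩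

theorem fiberProdToPlane_X : fiberProdToPlane k (fiberProdX k) = inr (1, 0) := by
  ext <;> simp [fiberProdToPlane, fiberProdX, truncToDual_mk_X]

theorem fiberProdToPlane_Y : fiberProdToPlane k (fiberProdY k) = inr (0, 1) := by
  ext <;> simp [fiberProdToPlane, fiberProdY, truncToDualC_mk_X]

theorem exists_lift_fst (b : TruncB k) : ∃ r : FiberProd k, algebraMap _ (TruncB k) r = b ∧
    KaehlerDifferential.D k (TruncC k) (algebraMap (FiberProd k) (TruncC k) r) = 0 :=
  ⟨⟨(b, algebraMap k (TruncC k) (truncAugB k b)), ((truncAugC k).commutes _).symm⟩, rfl,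
    (KaehlerDifferential.D k _).map_algebraMap _⟩

theorem exists_lift_snd (c : TruncC k) : ∃ r : FiberProd k, algebraMap _ (TruncC k) r = c ∧
    KaehlerDifferential.D k (TruncB k) (algebraMap (FiberProd k) (TruncB k) r) = 0 :=
  ⟨⟨(algebraMap k (TruncB k) (truncAugC k c), c), (truncAugB k).commutes _⟩, rfl,
    (KaehlerDifferential.D k _).map_algebraMap _⟩

theorem coe_kaehlerComparison : ⇑(kaehlerComparison k) =
    (KaehlerDifferential.map k k (FiberProd k) (TruncB k)).prod
      (KaehlerDifferential.map k k (FiberProd k) (TruncC k)) :=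
  rfl

end FiberProd

/-- Let `k` be a field, `B = k[x]/(x²)`, `C = k[y]/(y²)`, `A = k`, and
`R = B ×_A C ≅ k[x,y]/(x²,xy,y²)`.  The natural map
`Ω¹_{R/k} → Ω¹_{B/k} × Ω¹_{C/k}` induced by the two projections is surjective but not
injective. -/
theorem kaehlerComparison_surjective_not_injective (k : Type*) [Field k] :
    Function.Surjective (kaehlerComparison k) ∧
      ¬ Function.Injective (kaehlerComparison k) := by
  rw [coe_kaehlerComparison]
  refine ⟨KaehlerDifferential.map_prod_map_surjective (exists_lift_fst k) (exists_lift_snd k),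
    fun hinj ↦ ?_⟩
  have hne : fiberProdX k • KaehlerDifferential.D k _ (fiberProdY k) ≠ 0 := by
    apply KaehlerDifferential.smul_D_ne_zero_of_algHom (fiberProdToPlane k)
    rw [fiberProdToPlane_X, fiberProdToPlane_Y]
    exact KaehlerDifferential.inr_smul_D_inr_ne_zero k
  exact hne (hinj ((KaehlerDifferential.map_prod_map_smul_D_eq_zero rfl rfl).trans
    (map_zero _).symm))
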